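/- arXiv:2106.07143 — 4 statements merged into one kernel-verified Lean document; each statement's English description precedes it below -/
import Mathlib

section
/- (Riesz composition formula) Let n ∈ ℕ and α, β ∈ (0, n) with α + β < n. Then for all x, w ∈ ℝⁿ with x ≠ w, ∫_{ℝⁿ} |x - y|^{α-n} |y - w|^{β-n} dy = [γ(α,n) γ(β,n)/γ(α+β,n)] |x - w|^{α+β-n}, where γ(s,n) = π^{n/2} 2^s Γ(s/2)/Γ((n-s)/2). -/
/-
Subordination, `c ^ (-s) = Γ(s)⁻¹ ∫₀^∞ t ^ (s - 1) e ^ (-c t) dt`, applied to both factors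
`|z - y| ^ (α - n)` and `|y| ^ (β - n)` turns the integral over `y` into a Gaussian convolution,
which completing the square evaluates to `(π / (t + u)) ^ (n / 2) exp (-(t u / (t + u)) |z| ^ 2)`.
The remaining integral over `t, u > 0` is computed by the substitution `u = t v`, one more Gamma
integral in `t`, and the Beta integral
`∫₀^∞ v ^ (p - 1) (1 + v) ^ (-(p + q)) dv = Γ(p) Γ(q) / Γ(p + q)`. Working with lower
Lebesgue integrals makes every use of Tonelli free; the finiteness of the final value then
identifies the Bochner integral of the theorem with it.
-/

open MeasureTheory Real Set
open scoped ENNReal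

/-- `γ(s,n) = π^(n/2) 2^s Γ(s/2)/Γ((n-s)/2)`. -/
noncomputable def rieszGamma (s : ℝ) (n : ℕ) : ℝ :=
  Real.pi ^ ((n : ℝ) / 2) * 2 ^ s * Real.Gamma (s / 2) / Real.Gamma (((n : ℝ) - s) / 2)

lemma lintegral_rpow_mul_exp_neg_mul_Ioi {s c : ℝ} (hs : 0 < s) (hc : 0 < c) :
    ∫⁻ t in Ioi 0, ENNReal.ofReal (t ^ (s - 1) * exp (-(c * t)))
      = ENNReal.ofReal (Gamma s * c ^ (-s)) := by
  have hI := integral_rpow_mul_exp_neg_mul_Ioi hs hc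
  rw [one_div, inv_rpow hc.le, ← rpow_neg hc.le, mul_comm] at hI
  rw [← hI, ofReal_integral_eq_lintegral_ofReal]
  · exact .of_integral_ne_zero (by rw [hI]; have := Gamma_pos_of_pos hs; positivity)
  · filter_upwards [self_mem_ae_restrict measurableSet_Ioi] with t (ht : 0 < t)
    positivity

lemma lintegral_Ioi_eq_ofReal_mul_lintegral_comp_mul_left {c : ℝ} (hc : 0 < c)
    (g : ℝ → ℝ≥0∞) :
    ∫⁻ u in Ioi 0, g u = ENNReal.ofReal c * ∫⁻ v in Ioi 0, g (c * v) := by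
  have h := lintegral_image_eq_lintegral_abs_deriv_mul (measurableSet_Ioi (a := 0))
    (f := (c * ·)) (fun v _ => by simpa using ((hasDerivAt_id v).const_mul c).hasDerivWithinAt)
    (mul_right_injective₀ hc.ne').injOn g
  rw [image_const_mul_Ioi_zero hc, abs_of_pos hc] at h
  rw [h, lintegral_const_mul' _ _ ENNReal.ofReal_ne_top]

lemma ofReal_rpow_neg_eq_lintegral {s c : ℝ} (hs : 0 < s) (hc : 0 < c) :
    ENNReal.ofReal (c ^ (-s))
      = ENNReal.ofReal (Gamma s)⁻¹
          * ∫⁻ t in Ioi 0, ENNReal.ofReal (t ^ (s - 1) * exp (-(c * t))) := by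
  rw [lintegral_rpow_mul_exp_neg_mul_Ioi hs hc, ← ENNReal.ofReal_mul (by positivity),
    inv_mul_cancel_left₀ (Gamma_pos_of_pos hs).ne']

lemma lintegral_rpow_mul_one_add_rpow_neg_Ioi {p q : ℝ} (hp : 0 < p) (hq : 0 < q) :
    ∫⁻ v in Ioi 0, ENNReal.ofReal (v ^ (p - 1) * (1 + v) ^ (-(p + q)))
      = ENNReal.ofReal (Gamma p * Gamma q / Gamma (p + q)) := by
  have hpq : 0 < p + q := add_pos hp hq
  have h_subord : ∀ v ∈ Ioi (0 : ℝ), ENNReal.ofReal (v ^ (p - 1) * (1 + v) ^ (-(p + q)))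
      = ENNReal.ofReal (Gamma (p + q))⁻¹ * ∫⁻ t in Ioi 0,
          ENNReal.ofReal (t ^ (p + q - 1) * exp (-t))
            * ENNReal.ofReal (v ^ (p - 1) * exp (-(t * v))) := by
    intro v (hv : 0 < v)
    rw [ENNReal.ofReal_mul (by positivity), ofReal_rpow_neg_eq_lintegral hpq (by positivity),
      mul_left_comm, ← lintegral_const_mul' _ _ ENNReal.ofReal_ne_top]
    congr 1
    refine setLIntegral_congr_fun measurableSet_Ioi fun t (ht : 0 < t) => ?_
    rw [← ENNReal.ofReal_mul (by positivity), ← ENNReal.ofReal_mul (by positivity)]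
    congr 1
    rw [show -((1 + v) * t) = -t + -(t * v) by ring, exp_add]
    ring
  have h_inner : ∀ t ∈ Ioi (0 : ℝ), ∫⁻ v in Ioi 0,
      ENNReal.ofReal (t ^ (p + q - 1) * exp (-t)) * ENNReal.ofReal (v ^ (p - 1) * exp (-(t * v)))
        = ENNReal.ofReal (Gamma p) * ENNReal.ofReal (t ^ (q - 1) * exp (-(1 * t))) := by
    intro t (ht : 0 < t)
    rw [lintegral_const_mul' _ _ ENNReal.ofReal_ne_top,
      lintegral_rpow_mul_exp_neg_mul_Ioi hp ht, ← ENNReal.ofReal_mul (by positivity),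
      ← ENNReal.ofReal_mul (Gamma_pos_of_pos hp).le, one_mul, mul_comm (Gamma p), ← mul_assoc,
      mul_right_comm (t ^ _), ← rpow_add ht]
    ring_nf
  calc ∫⁻ v in Ioi 0, ENNReal.ofReal (v ^ (p - 1) * (1 + v) ^ (-(p + q)))
      = ENNReal.ofReal (Gamma (p + q))⁻¹ * ∫⁻ t in Ioi 0, ∫⁻ v in Ioi 0,
          ENNReal.ofReal (t ^ (p + q - 1) * exp (-t))
            * ENNReal.ofReal (v ^ (p - 1) * exp (-(t * v))) := by
        rw [setLIntegral_congr_fun measurableSet_Ioi h_subord,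
          lintegral_const_mul' _ _ ENNReal.ofReal_ne_top, lintegral_lintegral_swap]
        exact (by fun_prop : Measurable _).aemeasurable
    _ = ENNReal.ofReal (Gamma (p + q))⁻¹
          * (ENNReal.ofReal (Gamma p) * ENNReal.ofReal (Gamma q)) := by
        rw [setLIntegral_congr_fun measurableSet_Ioi h_inner,
          lintegral_const_mul' _ _ ENNReal.ofReal_ne_top,
          lintegral_rpow_mul_exp_neg_mul_Ioi hq one_pos, one_rpow, mul_one]
    _ = ENNReal.ofReal (Gamma p * Gamma q / Gamma (p + q)) := by
        rw [← ENNReal.ofReal_mul (Gamma_pos_of_pos hp).le, ← ENNReal.ofReal_mul (by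
          have := Gamma_pos_of_pos hpq; positivity), inv_mul_eq_div]

lemma lintegral_Ioi_lintegral_Ioi_rpow_mul_exp_neg_mul_div_add {a b d c : ℝ}
    (hab : d < a + b) (ha : a < d) (hb : b < d) (hc : 0 < c) :
    ∫⁻ t in Ioi 0, ∫⁻ u in Ioi 0,
        ENNReal.ofReal (t ^ (a - 1) * u ^ (b - 1)
          * ((t + u) ^ (-d) * exp (-(c * (t * u / (t + u))))))
      = ENNReal.ofReal (Gamma (a + b - d) * c ^ (-(a + b - d))
          * (Gamma (d - a) * Gamma (d - b) / Gamma (d - a + (d - b)))) := by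
  set q := a + b - d with hq_def
  have hq : 0 < q := by linarith
  have h_subst : ∀ t ∈ Ioi (0 : ℝ), ∫⁻ u in Ioi 0,
      ENNReal.ofReal (t ^ (a - 1) * u ^ (b - 1)
        * ((t + u) ^ (-d) * exp (-(c * (t * u / (t + u))))))
        = ∫⁻ v in Ioi 0, ENNReal.ofReal (v ^ (b - 1) * (1 + v) ^ (-d))
            * ENNReal.ofReal (t ^ (q - 1) * exp (-(c * v / (1 + v) * t))) := by
    intro t (ht : 0 < t)
    rw [lintegral_Ioi_eq_ofReal_mul_lintegral_comp_mul_left ht,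
      ← lintegral_const_mul' _ _ ENNReal.ofReal_ne_top]
    refine setLIntegral_congr_fun measurableSet_Ioi fun v (hv : 0 < v) => ?_
    rw [← ENNReal.ofReal_mul ht.le, ← ENNReal.ofReal_mul (by positivity)]
    congr 1
    have h1v : 0 < 1 + v := by linarith
    rw [mul_rpow ht.le hv.le, show t + t * v = t * (1 + v) by ring, mul_rpow ht.le h1v.le,
      show t * (t * v) / (t * (1 + v)) = v / (1 + v) * t by field_simp,
      show t ^ (q - 1) = t * t ^ (a - 1) * t ^ (b - 1) * t ^ (-d) by
        rw [← rpow_one_add' ht.le (by linarith), ← rpow_add ht, ← rpow_add ht, hq_def]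
        ring_nf]
    ring_nf
  have h_gamma : ∀ v ∈ Ioi (0 : ℝ), ENNReal.ofReal (v ^ (b - 1) * (1 + v) ^ (-d))
      * ∫⁻ t in Ioi 0, ENNReal.ofReal (t ^ (q - 1) * exp (-(c * v / (1 + v) * t)))
        = ENNReal.ofReal (Gamma q * c ^ (-q))
          * ENNReal.ofReal (v ^ (d - a - 1) * (1 + v) ^ (-(d - a + (d - b)))) := by
    intro v (hv : 0 < v)
    have h1v : 0 < 1 + v := by linarith
    rw [lintegral_rpow_mul_exp_neg_mul_Ioi hq (by positivity),
      ← ENNReal.ofReal_mul (by positivity),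
      ← ENNReal.ofReal_mul (by have := Gamma_pos_of_pos hq; positivity)]
    congr 1
    rw [div_rpow (by positivity) h1v.le, mul_rpow hc.le hv.le,
      show d - a - 1 = b - 1 + -q by ring, show -(d - a + (d - b)) = -d - -q by ring,
      rpow_add hv, rpow_sub h1v]
    field_simp
  calc _ = ∫⁻ t in Ioi 0, ∫⁻ v in Ioi 0, ENNReal.ofReal (v ^ (b - 1) * (1 + v) ^ (-d))
            * ENNReal.ofReal (t ^ (q - 1) * exp (-(c * v / (1 + v) * t))) :=
        setLIntegral_congr_fun measurableSet_Ioi h_subst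
    _ = ∫⁻ v in Ioi 0, ENNReal.ofReal (Gamma q * c ^ (-q))
          * ENNReal.ofReal (v ^ (d - a - 1) * (1 + v) ^ (-(d - a + (d - b)))) := by
        rw [lintegral_lintegral_swap (by fun_prop)]
        refine setLIntegral_congr_fun measurableSet_Ioi fun v hv => ?_
        rw [lintegral_const_mul' _ _ ENNReal.ofReal_ne_top, h_gamma v hv]
    _ = _ := by
        rw [lintegral_const_mul' _ _ ENNReal.ofReal_ne_top,
          lintegral_rpow_mul_one_add_rpow_neg_Ioi (by linarith) (by linarith),
          ← ENNReal.ofReal_mul (by have := Gamma_pos_of_pos hq; positivity)]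

lemma rieszGamma_pos {s : ℝ} {n : ℕ} (hs : 0 < s) (hsn : s < n) : 0 < rieszGamma s n := by
  have := Gamma_pos_of_pos (show 0 < s / 2 by linarith)
  have := Gamma_pos_of_pos (show 0 < (n - s) / 2 by linarith)
  unfold rieszGamma
  positivity

lemma rpow_sub_eq_sq_rpow {r : ℝ} (hr : 0 ≤ r) (s n : ℝ) :
    r ^ (s - n) = (r ^ 2) ^ (-((n - s) / 2)) := by
  rw [← rpow_natCast, ← rpow_mul hr]
  ring_nf

section InnerProductSpace

variable {V : Type*} [NormedAddCommGroup V] [InnerProductSpace ℝ V] [FiniteDimensional ℝ V]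
  [MeasurableSpace V] [BorelSpace V]

lemma lintegral_exp_neg_mul_sq_norm {b : ℝ} (hb : 0 < b) :
    ∫⁻ y : V, ENNReal.ofReal (exp (-b * ‖y‖ ^ 2))
      = ENNReal.ofReal ((π / b) ^ (Module.finrank ℝ V / 2 : ℝ)) := by
  have hI := GaussianFourier.integral_rexp_neg_mul_sq_norm (V := V) hb
  rw [← hI, ofReal_integral_eq_lintegral_ofReal]
  · exact .of_integral_ne_zero (by rw [hI]; positivity)
  · exact ae_of_all _ fun _ => (exp_pos _).le

lemma lintegral_exp_neg_mul_sq_norm_sub_mul_exp_neg_mul_sq_norm {t u : ℝ} (ht : 0 < t)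
    (hu : 0 < u) (z : V) :
    ∫⁻ y : V, ENNReal.ofReal (exp (-t * ‖z - y‖ ^ 2) * exp (-u * ‖y‖ ^ 2))
      = ENNReal.ofReal ((π / (t + u)) ^ (Module.finrank ℝ V / 2 : ℝ)
          * exp (-(t * u / (t + u)) * ‖z‖ ^ 2)) := by
  have htu : 0 < t + u := add_pos ht hu
  set m : V := (t / (t + u)) • z
  have h_complete_square : ∀ y : V, -t * ‖z - y‖ ^ 2 + -u * ‖y‖ ^ 2
      = -(t + u) * ‖y - m‖ ^ 2 + -(t * u / (t + u)) * ‖z‖ ^ 2 := by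
    intro y
    rw [norm_sub_sq_real, norm_sub_sq_real, real_inner_smul_right, norm_smul, mul_pow,
      Real.norm_eq_abs, sq_abs, real_inner_comm]
    field_simp
    ring
  simp_rw [← exp_add, h_complete_square, exp_add, ENNReal.ofReal_mul (exp_pos _).le]
  rw [lintegral_mul_const' _ _ ENNReal.ofReal_ne_top,
    lintegral_sub_right_eq_self (fun y => ENNReal.ofReal (exp (-(t + u) * ‖y‖ ^ 2))) m,
    lintegral_exp_neg_mul_sq_norm htu, ENNReal.ofReal_mul (by positivity)]

lemma lintegral_rpow_sq_norm_sub_mul_rpow_sq_norm [Nontrivial V] {a b : ℝ} (ha : 0 < a)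
    (hb : 0 < b) (z : V) :
    ∫⁻ y : V, ENNReal.ofReal ((‖z - y‖ ^ 2) ^ (-a) * (‖y‖ ^ 2) ^ (-b))
      = ENNReal.ofReal ((Gamma a)⁻¹ * (Gamma b)⁻¹ * π ^ (Module.finrank ℝ V / 2 : ℝ))
        * ∫⁻ t in Ioi 0, ∫⁻ u in Ioi 0, ENNReal.ofReal (t ^ (a - 1) * u ^ (b - 1)
          * ((t + u) ^ (-(Module.finrank ℝ V / 2 : ℝ))
            * exp (-(‖z‖ ^ 2 * (t * u / (t + u)))))) := by
  set F : ℝ → V → ℝ≥0∞ := fun t y =>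
    ENNReal.ofReal (t ^ (a - 1) * exp (-(‖z - y‖ ^ 2 * t)))
  set G : ℝ → V → ℝ≥0∞ := fun u y =>
    ENNReal.ofReal (u ^ (b - 1) * exp (-(‖y‖ ^ 2 * u)))
  have h_subord : ∀ᵐ y : V, ENNReal.ofReal ((‖z - y‖ ^ 2) ^ (-a) * (‖y‖ ^ 2) ^ (-b))
      = ENNReal.ofReal ((Gamma a)⁻¹ * (Gamma b)⁻¹)
        * ∫⁻ t in Ioi 0, ∫⁻ u in Ioi 0, F t y * G u y := by
    filter_upwards [volume.ae_ne z, volume.ae_ne 0] with y hyz hy0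
    rw [ENNReal.ofReal_mul (by positivity),
      ofReal_rpow_neg_eq_lintegral ha (pow_pos (norm_pos_iff.2 (sub_ne_zero.2 hyz.symm)) 2),
      ofReal_rpow_neg_eq_lintegral hb (pow_pos (norm_pos_iff.2 hy0) 2),
      lintegral_lintegral_mul (by fun_prop) (by fun_prop),
      ENNReal.ofReal_mul (inv_nonneg.2 (Gamma_pos_of_pos ha).le)]
    ring
  have h_gauss : ∀ t ∈ Ioi (0 : ℝ), ∀ u ∈ Ioi (0 : ℝ), ∫⁻ y, F t y * G u y
      = ENNReal.ofReal (π ^ (Module.finrank ℝ V / 2 : ℝ))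
        * ENNReal.ofReal (t ^ (a - 1) * u ^ (b - 1) * ((t + u) ^ (-(Module.finrank ℝ V / 2 : ℝ))
          * exp (-(‖z‖ ^ 2 * (t * u / (t + u)))))) := by
    intro t (ht : 0 < t) u (hu : 0 < u)
    have h_split : ∀ y, F t y * G u y = ENNReal.ofReal (t ^ (a - 1) * u ^ (b - 1))
        * ENNReal.ofReal (exp (-t * ‖z - y‖ ^ 2) * exp (-u * ‖y‖ ^ 2)) := by
      intro y
      simp only [F, G]
      rw [← ENNReal.ofReal_mul (by positivity), ← ENNReal.ofReal_mul (by positivity)]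
      ring_nf
    simp_rw [h_split]
    rw [lintegral_const_mul' _ _ ENNReal.ofReal_ne_top,
      lintegral_exp_neg_mul_sq_norm_sub_mul_exp_neg_mul_sq_norm ht hu,
      ← ENNReal.ofReal_mul (by positivity), ← ENNReal.ofReal_mul (by positivity),
      div_rpow pi_pos.le (by positivity), rpow_neg (by positivity)]
    ring_nf
  calc _ = ∫⁻ y, ENNReal.ofReal ((Gamma a)⁻¹ * (Gamma b)⁻¹)
        * ∫⁻ t in Ioi 0, ∫⁻ u in Ioi 0, F t y * G u y := lintegral_congr_ae h_subord
    _ = ENNReal.ofReal ((Gamma a)⁻¹ * (Gamma b)⁻¹)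
        * ∫⁻ t in Ioi 0, ∫⁻ u in Ioi 0, ∫⁻ y, F t y * G u y := by
      have h_swap_u : ∀ t, ∫⁻ y, ∫⁻ u in Ioi 0, F t y * G u y
          = ∫⁻ u in Ioi 0, ∫⁻ y, F t y * G u y := fun t =>
        lintegral_lintegral_swap (by simp only [F, G]; fun_prop)
      have h_meas : Measurable fun p : (V × ℝ) × ℝ => F p.1.2 p.1.1 * G p.2 p.1.1 := by
        simp only [F, G]; fun_prop
      rw [lintegral_const_mul' _ _ ENNReal.ofReal_ne_top,
        lintegral_lintegral_swap h_meas.lintegral_prod_right'.aemeasurable]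
      simp_rw [h_swap_u]
    _ = _ := by
      rw [setLIntegral_congr_fun measurableSet_Ioi fun t ht =>
          setLIntegral_congr_fun measurableSet_Ioi fun u hu => h_gauss t ht u hu]
      simp_rw [lintegral_const_mul' _ _ ENNReal.ofReal_ne_top]
      have := Gamma_pos_of_pos ha
      have := Gamma_pos_of_pos hb
      rw [← mul_assoc, ← ENNReal.ofReal_mul (by positivity)]

lemma lintegral_rpow_norm_sub_mul_rpow_norm {α β : ℝ} (hα : 0 < α) (hβ : 0 < β)
    (hαβ : α + β < Module.finrank ℝ V) {z : V} (hz : z ≠ 0) :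
    ∫⁻ y : V, ENNReal.ofReal
        (‖z - y‖ ^ (α - Module.finrank ℝ V) * ‖y‖ ^ (β - Module.finrank ℝ V))
      = ENNReal.ofReal (rieszGamma α (Module.finrank ℝ V) * rieszGamma β (Module.finrank ℝ V)
          / rieszGamma (α + β) (Module.finrank ℝ V)
          * ‖z‖ ^ (α + β - Module.finrank ℝ V)) := by
  have : Nontrivial V := ⟨⟨z, 0, hz⟩⟩
  simp_rw [rpow_sub_eq_sq_rpow (norm_nonneg _)]
  rw [lintegral_rpow_sq_norm_sub_mul_rpow_sq_norm (by linarith) (by linarith),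
    lintegral_Ioi_lintegral_Ioi_rpow_mul_exp_neg_mul_div_add (by linarith) (by linarith)
      (by linarith) (by positivity)]
  generalize Module.finrank ℝ V = n at hαβ ⊢
  rw [show ((n : ℝ) - α) / 2 + (n - β) / 2 - n / 2 = (n - (α + β)) / 2 by ring,
    show (n : ℝ) / 2 - (n - α) / 2 = α / 2 by ring,
    show (n : ℝ) / 2 - (n - β) / 2 = β / 2 by ring,
    show α / 2 + β / 2 = (α + β) / 2 by ring]
  have := Gamma_pos_of_pos (show 0 < (n - α) / 2 by linarith)
  have := Gamma_pos_of_pos (show 0 < (n - β) / 2 by linarith)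
  have := Gamma_pos_of_pos (show 0 < (n - (α + β)) / 2 by linarith)
  have := Gamma_pos_of_pos (show 0 < (α + β) / 2 by linarith)
  have := norm_pos_iff.2 hz
  rw [← ENNReal.ofReal_mul (by positivity)]
  congr 1
  rw [rieszGamma, rieszGamma, rieszGamma, rpow_add two_pos]
  field_simp

end InnerProductSpace

theorem stmt4 (n : ℕ) (α β : ℝ)
    (hα : α ∈ Set.Ioo (0 : ℝ) n) (hβ : β ∈ Set.Ioo (0 : ℝ) n)
    (hαβ : α + β < n)
    (x w : EuclideanSpace ℝ (Fin n)) (hxw : x ≠ w) :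
    ∫ y : EuclideanSpace ℝ (Fin n),
        ‖x - y‖ ^ (α - (n : ℝ)) * ‖y - w‖ ^ (β - (n : ℝ))
      = (rieszGamma α n * rieszGamma β n / rieszGamma (α + β) n)
          * ‖x - w‖ ^ (α + β - (n : ℝ)) := by
  have h_shift := lintegral_add_right_eq_self (μ := volume)
    (fun y : EuclideanSpace ℝ (Fin n) =>
      ENNReal.ofReal (‖x - y‖ ^ (α - n) * ‖y - w‖ ^ (β - n))) w
  simp only [add_sub_cancel_right, sub_add_eq_sub_sub_swap] at h_shift
  have h_riesz := lintegral_rpow_norm_sub_mul_rpow_norm hα.1 hβ.1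
    (by rwa [finrank_euclideanSpace_fin]) (sub_ne_zero.2 hxw)
  rw [finrank_euclideanSpace_fin] at h_riesz
  rw [integral_eq_lintegral_of_nonneg_ae (ae_of_all _ fun y => by positivity) (by fun_prop),
    ← h_shift, h_riesz, ENNReal.toReal_ofReal]
  have := rieszGamma_pos hα.1 hα.2
  have := rieszGamma_pos hβ.1 hβ.2
  have := rieszGamma_pos (add_pos hα.1 hβ.1) hαβ
  positivity
end

section
/- Suppose ψ ∈ L⁵(ℝ³) is measurable and there exists C ∈ (0,∞) such that |ψ(x)| ≤ C ∫_{ℝ³} |x−y|^{−1} ⟨y⟩^{−4} |ψ(y)| dy for a.e. x ∈ ℝ³. Then ψ ∈ L^∞(ℝ³). -/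
/-!
The integral on the right is bounded uniformly in `x`. Indeed
`|x - y|⁻¹ ⟨y⟩⁻⁴ ≤ 1_{|x - y| < 1} |x - y|⁻¹ + ⟨y⟩⁻⁴`, and both terms lie in `L^{5/4}`:
`|z|^{-5/4}` is integrable near `0` in `ℝ³` and `⟨y⟩^{-5}` is integrable at infinity, while the
norm of the first term does not depend on `x` by translation invariance. Hölder's inequality
against `ψ ∈ L⁵` then bounds the integral, hence `|ψ|` a.e.
-/

open MeasureTheory Metric Module
open scoped ENNReal

lemma rpow_neg_norm_mul_le_indicator_add {E : Type*} [SeminormedAddGroup E] {a w : ℝ}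
    (ha : 0 ≤ a) (hw0 : 0 ≤ w) (hw1 : w ≤ 1) (z : E) :
    ‖z‖ ^ (-a) * w ≤ (ball (0 : E) 1).indicator (fun z => ‖z‖ ^ (-a)) z + w := by
  by_cases hz : z ∈ ball (0 : E) 1
  · rw [Set.indicator_of_mem hz]
    nlinarith [Real.rpow_nonneg (norm_nonneg z) (-a)]
  · rw [Set.indicator_of_notMem hz, zero_add]
    have : ‖z‖ ^ (-a) ≤ 1 :=
      Real.rpow_le_one_of_one_le_of_nonpos (by simpa using hz) (by linarith)
    nlinarith

lemma rpow_neg_sqrt_one_add_norm_sq_le_one {E : Type*} [SeminormedAddGroup E] {b : ℝ}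
    (hb : 0 ≤ b) (y : E) : √(1 + ‖y‖ ^ 2) ^ (-b) ≤ 1 :=
  Real.rpow_le_one_of_one_le_of_nonpos (Real.one_le_sqrt.2 (by nlinarith [sq_nonneg ‖y‖]))
    (by linarith)

lemma integral_mul_le_eLpNorm_mul_eLpNorm {α : Type*} [MeasurableSpace α] {μ : Measure α}
    {p q : ℝ≥0∞} [p.HolderConjugate q] {f g : α → ℝ} (hf : MemLp f p μ) (hg : MemLp g q μ) :
    ∫ x, f x * g x ∂μ ≤ (eLpNorm f p μ * eLpNorm g q μ).toReal := by
  have hholder : eLpNorm (fun x => f x * g x) 1 μ ≤ eLpNorm f p μ * eLpNorm g q μ := by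
    simpa using eLpNorm_le_eLpNorm_mul_eLpNorm'_of_norm hf.1 hg.1 (· * ·) 1
      (ae_of_all _ fun x => by simp [norm_mul])
  calc ∫ x, f x * g x ∂μ ≤ ‖∫ x, f x * g x ∂μ‖ := Real.le_norm_self _
    _ ≤ (eLpNorm (fun x => f x * g x) 1 μ).toReal := by
      rw [eLpNorm_one_eq_lintegral_enorm]
      simpa only [ofReal_norm] using norm_integral_le_lintegral_norm (μ := μ) (fun x => f x * g x)
    _ ≤ _ := ENNReal.toReal_mono (ENNReal.mul_ne_top hf.2.ne hg.2.ne) hholder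

section FiniteDimensional

variable {E : Type*} [NormedAddCommGroup E] [NormedSpace ℝ E] [FiniteDimensional ℝ E]
  [MeasurableSpace E] [BorelSpace E] {μ : Measure E} [μ.IsAddHaarMeasure]

lemma memLp_indicator_ball_rpow_neg_norm (hd : 1 ≤ finrank ℝ E) {q : ℝ≥0∞} (hq0 : q ≠ 0)
    (hq : q ≠ ∞) {a : ℝ} (haq : a * q.toReal < finrank ℝ E) (r : ℝ) :
    MemLp ((ball (0 : E) r).indicator fun z => ‖z‖ ^ (-a)) q μ := by
  have hmeas : Measurable fun z : E => ‖z‖ ^ (-a) := measurable_norm.pow_const _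
  rw [memLp_indicator_iff_restrict measurableSet_ball,
    ← integrable_norm_rpow_iff hmeas.aestronglyMeasurable hq0 hq]
  refine integrableOn_ball_of_norm_le_rpow hd (C := 1) haq (ae_of_all _ fun z => ?_)
    (hmeas.norm.pow_const _).aestronglyMeasurable
  rw [one_mul, Real.norm_of_nonneg (by positivity), Real.norm_of_nonneg (by positivity),
    ← Real.rpow_mul (norm_nonneg z), neg_mul]

lemma memLp_rpow_neg_sqrt_one_add_norm_sq {q : ℝ≥0∞} (hq0 : q ≠ 0) (hq : q ≠ ∞) {b : ℝ}
    (hbq : finrank ℝ E < b * q.toReal) :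
    MemLp (fun y : E => √(1 + ‖y‖ ^ 2) ^ (-b)) q μ := by
  have hmeas : AEStronglyMeasurable (fun y : E => √(1 + ‖y‖ ^ 2) ^ (-b)) μ :=
    (by fun_prop : Measurable fun y : E => √(1 + ‖y‖ ^ 2)).pow_const _ |>.aestronglyMeasurable
  rw [← integrable_norm_rpow_iff hmeas hq0 hq]
  refine (integrable_rpow_neg_one_add_norm_sq (μ := μ) hbq).congr (ae_of_all _ fun y => ?_)
  dsimp only
  rw [Real.norm_of_nonneg (by positivity), Real.sqrt_eq_rpow, ← Real.rpow_mul (by positivity),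
    ← Real.rpow_mul (by positivity)]
  ring_nf

lemma eLpNorm_rpow_neg_norm_sub_mul_le {q : ℝ≥0∞} (hq : 1 ≤ q) {a : ℝ} (ha : 0 ≤ a) {w : E → ℝ}
    (hw : AEStronglyMeasurable w μ) (hw0 : ∀ y, 0 ≤ w y) (hw1 : ∀ y, w y ≤ 1) (x : E) :
    eLpNorm (fun y => ‖x - y‖ ^ (-a) * w y) q μ ≤
      eLpNorm ((ball (0 : E) 1).indicator fun z => ‖z‖ ^ (-a)) q μ + eLpNorm w q μ := by
  set k : E → ℝ := (ball (0 : E) 1).indicator fun z => ‖z‖ ^ (-a)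
  have hk : AEStronglyMeasurable k μ :=
    ((measurable_norm.pow_const _).indicator measurableSet_ball).aestronglyMeasurable
  have htrans : MeasurePreserving (fun y : E => x - y) μ μ := Measure.measurePreserving_sub_left μ x
  calc eLpNorm (fun y => ‖x - y‖ ^ (-a) * w y) q μ ≤ eLpNorm (fun y => k (x - y) + w y) q μ := by
        refine eLpNorm_mono_real fun y => ?_
        rw [Real.norm_of_nonneg (mul_nonneg (by positivity) (hw0 y))]
        exact rpow_neg_norm_mul_le_indicator_add ha (hw0 y) (hw1 y) (x - y)
    _ ≤ eLpNorm (k ∘ fun y => x - y) q μ + eLpNorm w q μ :=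
        eLpNorm_add_le (hk.comp_measurePreserving htrans) hw hq
    _ = eLpNorm k q μ + eLpNorm w q μ := by rw [eLpNorm_comp_measurePreserving hk htrans]

lemma integral_rpow_neg_norm_sub_mul_abs_le (hd : 1 ≤ finrank ℝ E) {p q : ℝ≥0∞}
    [q.HolderConjugate p] (hq : q ≠ ∞) {a : ℝ} (ha : 0 ≤ a) (haq : a * q.toReal < finrank ℝ E)
    {w : E → ℝ} (hw : MemLp w q μ) (hw0 : ∀ y, 0 ≤ w y) (hw1 : ∀ y, w y ≤ 1)
    {ψ : E → ℝ} (hψ : MemLp ψ p μ) (x : E) :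
    ∫ y, ‖x - y‖ ^ (-a) * w y * |ψ y| ∂μ ≤
      ((eLpNorm ((ball (0 : E) 1).indicator fun z => ‖z‖ ^ (-a)) q μ + eLpNorm w q μ) *
        eLpNorm ψ p μ).toReal := by
  have hq1 : 1 ≤ q := ENNReal.HolderConjugate.one_le q p
  have hk := memLp_indicator_ball_rpow_neg_norm (μ := μ) hd (by positivity) hq haq 1
  have hkernel := eLpNorm_rpow_neg_norm_sub_mul_le hq1 ha hw.1 hw0 hw1 x
  have hkernel_memLp : MemLp (fun y => ‖x - y‖ ^ (-a) * w y) q μ :=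
    ⟨(((measurable_const.sub measurable_id).norm.pow_const _).aestronglyMeasurable).mul hw.1,
      hkernel.trans_lt (ENNReal.add_lt_top.2 ⟨hk.2, hw.2⟩)⟩
  calc ∫ y, ‖x - y‖ ^ (-a) * w y * |ψ y| ∂μ
      ≤ (eLpNorm (fun y => ‖x - y‖ ^ (-a) * w y) q μ * eLpNorm (fun y => ‖ψ y‖) p μ).toReal :=
        integral_mul_le_eLpNorm_mul_eLpNorm hkernel_memLp hψ.norm
    _ ≤ _ := by
        rw [eLpNorm_norm]
        exact ENNReal.toReal_mono (ENNReal.mul_ne_top (ENNReal.add_ne_top.2 ⟨hk.2.ne, hw.2.ne⟩)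
          hψ.2.ne) (mul_le_mul_left hkernel _)

end FiniteDimensional

theorem stmt17_general (ψ : EuclideanSpace ℝ (Fin 3) → ℝ)
    (hψ : MemLp ψ 5 volume) (C : ℝ)
    (hbound : ∀ᵐ x : EuclideanSpace ℝ (Fin 3),
      |ψ x| ≤ C * ∫ y : EuclideanSpace ℝ (Fin 3),
        ‖x - y‖ ^ (-(1 : ℝ)) * Real.sqrt (1 + ‖y‖ ^ 2) ^ (-(4 : ℝ)) * |ψ y|) :
    MemLp ψ ⊤ volume := by
  have : ENNReal.HolderConjugate (5 / 4) 5 := by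
    rw [ENNReal.holderConjugate_iff, ENNReal.inv_div (by simp) (by simp), div_eq_mul_inv,
      ← add_one_mul, show (4 : ℝ≥0∞) + 1 = 5 by norm_num,
      ENNReal.mul_inv_cancel (by simp) (by simp)]
  have hd : finrank ℝ (EuclideanSpace ℝ (Fin 3)) = 3 := finrank_euclideanSpace_fin
  have hq : (5 / 4 : ℝ≥0∞).toReal = 5 / 4 := by norm_num [ENNReal.toReal_div]
  have hq_ne_top : (5 / 4 : ℝ≥0∞) ≠ ∞ := ENNReal.div_ne_top (by simp) (by simp)
  have hw : MemLp (fun y : EuclideanSpace ℝ (Fin 3) => √(1 + ‖y‖ ^ 2) ^ (-(4 : ℝ))) (5 / 4) :=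
    memLp_rpow_neg_sqrt_one_add_norm_sq (by simp) hq_ne_top (by rw [hd, hq]; norm_num)
  obtain ⟨M, hM⟩ : ∃ M, ∀ x : EuclideanSpace ℝ (Fin 3),
      ∫ y, ‖x - y‖ ^ (-(1 : ℝ)) * √(1 + ‖y‖ ^ 2) ^ (-(4 : ℝ)) * |ψ y| ≤ M :=
    ⟨_, integral_rpow_neg_norm_sub_mul_abs_le (by rw [hd]; norm_num) hq_ne_top zero_le_one
      (by rw [hd, hq]; norm_num) hw (fun y => by positivity)
      (rpow_neg_sqrt_one_add_norm_sq_le_one (by norm_num)) hψ⟩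
  refine memLp_top_of_bound hψ.1 (|C| * M) (hbound.mono fun x hx => ?_)
  have hI : 0 ≤ ∫ y, ‖x - y‖ ^ (-(1 : ℝ)) * √(1 + ‖y‖ ^ 2) ^ (-(4 : ℝ)) * |ψ y| :=
    integral_nonneg fun y => by positivity
  calc ‖ψ x‖ = |ψ x| := Real.norm_eq_abs _
    _ ≤ C * ∫ y, ‖x - y‖ ^ (-(1 : ℝ)) * √(1 + ‖y‖ ^ 2) ^ (-(4 : ℝ)) * |ψ y| := hx
    _ ≤ |C| * M := mul_le_mul (le_abs_self C) (hM x) hI (abs_nonneg C)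

theorem stmt17 (ψ : EuclideanSpace ℝ (Fin 3) → ℝ) (hmeas : Measurable ψ)
    (hψ : MemLp ψ 5 volume) (C : ℝ) (hC : 0 < C)
    (hbound : ∀ᵐ x : EuclideanSpace ℝ (Fin 3),
      |ψ x| ≤ C * ∫ y : EuclideanSpace ℝ (Fin 3),
        ‖x - y‖ ^ (-(1 : ℝ)) * Real.sqrt (1 + ‖y‖ ^ 2) ^ (-(4 : ℝ)) * |ψ y|) :
    MemLp ψ ⊤ volume :=
  stmt17_general ψ hψ C hbound
end

section
/- Suppose Ψ ∈ L³(ℝ², ℂ²)-valued measurable (i.e., each component in L³(ℝ²)) and there exists C ∈ (0,∞) such that ‖Ψ(x)‖ ≤ C ∫_{ℝ²} |x−y|^{−1} ⟨y⟩^{−2} ‖Ψ(y)‖ dy for a.e. x ∈ ℝ². Then Ψ ∈ L^∞(ℝ², ℂ²). -/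
/-!
Split the kernel `k x y = ‖x - y‖⁻¹ ⟨y⟩⁻²` according to whether `‖x - y‖ < 1`: near the
diagonal `k x y ≤ ‖x - y‖⁻¹`, away from it `k x y ≤ ⟨y⟩⁻²`. Hence `‖k x ·‖_{3/2}^{3/2}` is at most
`∫_{|z|<1} |z|^{-3/2} dz + ∫ ⟨y⟩^{-3} dy < ∞` uniformly in `x` (both exponents are on the integrable
side of the dimension 2), and Hölder's inequality with exponents `3/2` and `3` bounds
`∫ k x y ‖Ψ y‖ dy` by a constant times `‖Ψ‖_{L³}`.
-/

open MeasureTheory Metric Module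
open scoped ENNReal

lemma lintegral_ofReal_mul_norm_le_eLpNorm {α F : Type*} [MeasurableSpace α] {μ : Measure α}
    [NormedAddCommGroup F] {p q : ℝ} (hpq : p.HolderConjugate q) {f : α → ℝ} {g : α → F}
    (hf₀ : ∀ y, 0 ≤ f y) (hf : AEMeasurable f μ) (hg : AEStronglyMeasurable g μ) :
    ∫⁻ y, ENNReal.ofReal (f y * ‖g y‖) ∂μ ≤
      (∫⁻ y, ENNReal.ofReal (f y ^ p) ∂μ) ^ (1 / p) * eLpNorm g (ENNReal.ofReal q) μ := by
  rw [eLpNorm_eq_lintegral_rpow_enorm_toReal (by simp [hpq.symm.pos]) ENNReal.ofReal_ne_top,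
    ENNReal.toReal_ofReal hpq.symm.nonneg]
  simp_rw [ENNReal.ofReal_mul (hf₀ _), ← ENNReal.ofReal_rpow_of_nonneg (hf₀ _) hpq.nonneg,
    ofReal_norm]
  exact ENNReal.lintegral_mul_le_Lp_mul_Lq μ hpq hf.ennreal_ofReal hg.enorm

lemma Real.sqrt_one_add_sq_rpow_neg (t s : ℝ) :
    √(1 + t ^ 2) ^ (-s) = (1 + t ^ 2) ^ (-s / 2) := by
  rw [Real.sqrt_eq_rpow, ← Real.rpow_mul (by positivity)]
  ring_nf

lemma norm_sub_rpow_neg_mul_sqrt_rpow_neg_le {E : Type*} [SeminormedAddCommGroup E] {a b : ℝ}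
    (ha : 0 ≤ a) (hb : 0 ≤ b) (x y : E) :
    ‖x - y‖ ^ (-a) * √(1 + ‖y‖ ^ 2) ^ (-b) ≤
      (ball 0 1).indicator (fun z => ‖z‖ ^ (-a)) (y - x) + √(1 + ‖y‖ ^ 2) ^ (-b) := by
  have h_bracket : √(1 + ‖y‖ ^ 2) ^ (-b) ≤ 1 :=
    Real.rpow_le_one_of_one_le_of_nonpos (Real.one_le_sqrt.2 (by simp)) (neg_nonpos.2 hb)
  by_cases hxy : y - x ∈ ball 0 1
  · rw [Set.indicator_of_mem hxy, norm_sub_rev]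
    exact (mul_le_of_le_one_right (by positivity) h_bracket).trans
      (le_add_of_nonneg_right (by positivity))
  · rw [Set.indicator_of_notMem hxy, zero_add]
    have h_far : ‖x - y‖ ^ (-a) ≤ 1 := by
      refine Real.rpow_le_one_of_one_le_of_nonpos ?_ (neg_nonpos.2 ha)
      simpa [norm_sub_rev] using hxy
    exact mul_le_of_le_one_left (by positivity) h_far

lemma lintegral_norm_sub_rpow_neg_mul_sqrt_rpow_neg_le {E : Type*} [NormedAddCommGroup E]
    [MeasurableSpace E] [BorelSpace E] {μ : Measure E} [μ.IsAddRightInvariant] {a b : ℝ}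
    (ha : 0 ≤ a) (hb : 0 ≤ b) (x : E) :
    ∫⁻ y, ENNReal.ofReal (‖x - y‖ ^ (-a) * √(1 + ‖y‖ ^ 2) ^ (-b)) ∂μ ≤
      ∫⁻ z in ball (0 : E) 1, ENNReal.ofReal (‖z‖ ^ (-a)) ∂μ +
        ∫⁻ y, ENNReal.ofReal (√(1 + ‖y‖ ^ 2) ^ (-b)) ∂μ := calc
  _ ≤ ∫⁻ y, ENNReal.ofReal ((ball 0 1).indicator (fun z => ‖z‖ ^ (-a)) (y - x)) +
        ENNReal.ofReal (√(1 + ‖y‖ ^ 2) ^ (-b)) ∂μ :=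
      lintegral_mono fun y => (ENNReal.ofReal_le_ofReal
        (norm_sub_rpow_neg_mul_sqrt_rpow_neg_le ha hb x y)).trans ENNReal.ofReal_add_le
  _ = _ := by
    rw [lintegral_add_right _ (by fun_prop), lintegral_sub_right_eq_self
      (fun z => ENNReal.ofReal ((ball 0 1).indicator (fun z => ‖z‖ ^ (-a)) z)) x,
      ← lintegral_indicator measurableSet_ball]
    congr 2 with z
    exact congr_fun (Set.indicator_comp_of_zero ENNReal.ofReal_zero).symm z

section AddHaar

variable {E : Type*} [NormedAddCommGroup E] [NormedSpace ℝ E] [FiniteDimensional ℝ E]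
  [MeasurableSpace E] [BorelSpace E] {μ : Measure E} [μ.IsAddHaarMeasure]

lemma setLIntegral_ball_norm_rpow_neg_lt_top (hd : 1 ≤ finrank ℝ E) {s : ℝ}
    (hs : s < finrank ℝ E) :
    ∫⁻ z in ball (0 : E) 1, ENNReal.ofReal (‖z‖ ^ (-s)) ∂μ < ∞ := by
  refine IntegrableOn.setLIntegral_lt_top
    (integrableOn_ball_of_norm_le_rpow (C := 1) hd hs ?_
      (by fun_prop : Measurable fun z : E => ‖z‖ ^ (-s)).aestronglyMeasurable)
  filter_upwards with z
  rw [one_mul, Real.norm_of_nonneg (by positivity)]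

lemma lintegral_sqrt_one_add_norm_sq_rpow_neg_lt_top {s : ℝ} (hs : finrank ℝ E < s) :
    ∫⁻ y, ENNReal.ofReal (√(1 + ‖y‖ ^ 2) ^ (-s)) ∂μ < ∞ := by
  simpa only [Real.sqrt_one_add_sq_rpow_neg] using
    (integrable_rpow_neg_one_add_norm_sq (μ := μ) hs).lintegral_lt_top

lemma exists_forall_integral_norm_sub_rpow_neg_mul_sqrt_rpow_neg_mul_norm_le
    {F : Type*} [NormedAddCommGroup F] {a b p q : ℝ} (hpq : p.HolderConjugate q) (ha : 0 ≤ a)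
    (hap : a * p < finrank ℝ E) (hbp : finrank ℝ E < b * p) {g : E → F}
    (hg : MemLp g (ENNReal.ofReal q) μ) :
    ∃ M, ∀ x, ∫ y, ‖x - y‖ ^ (-a) * √(1 + ‖y‖ ^ 2) ^ (-b) * ‖g y‖ ∂μ ≤ M := by
  have hap₀ : 0 ≤ a * p := mul_nonneg ha hpq.nonneg
  have hbp₀ : 0 ≤ b * p := (Nat.cast_nonneg _).trans hbp.le
  have hd : 1 ≤ finrank ℝ E := by
    have : (0 : ℝ) < finrank ℝ E := hap₀.trans_lt hap
    exact_mod_cast this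
  set K := ∫⁻ z in ball (0 : E) 1, ENNReal.ofReal (‖z‖ ^ (-(a * p))) ∂μ +
    ∫⁻ y, ENNReal.ofReal (√(1 + ‖y‖ ^ 2) ^ (-(b * p))) ∂μ
  have hK : K < ∞ := ENNReal.add_lt_top.2
    ⟨setLIntegral_ball_norm_rpow_neg_lt_top hd hap,
      lintegral_sqrt_one_add_norm_sq_rpow_neg_lt_top hbp⟩
  have hp_inv : 0 ≤ 1 / p := (one_div_pos.2 hpq.pos).le
  refine ⟨(K ^ (1 / p) * eLpNorm g (ENNReal.ofReal q) μ).toReal, fun x => ?_⟩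
  have hpow (y : E) : (‖x - y‖ ^ (-a) * √(1 + ‖y‖ ^ 2) ^ (-b)) ^ p =
      ‖x - y‖ ^ (-(a * p)) * √(1 + ‖y‖ ^ 2) ^ (-(b * p)) := by
    rw [Real.mul_rpow (by positivity) (by positivity), ← Real.rpow_mul (by positivity),
      ← Real.rpow_mul (by positivity), neg_mul, neg_mul]
  have hmeas : AEStronglyMeasurable
      (fun y => ‖x - y‖ ^ (-a) * √(1 + ‖y‖ ^ 2) ^ (-b) * ‖g y‖) μ :=
    (by fun_prop : Measurable fun y => ‖x - y‖ ^ (-a) * √(1 + ‖y‖ ^ 2) ^ (-b))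
      |>.aestronglyMeasurable.mul hg.1.norm
  rw [integral_eq_lintegral_of_nonneg_ae (ae_of_all _ fun y => by positivity) hmeas]
  refine ENNReal.toReal_mono
    (ENNReal.mul_ne_top (ENNReal.rpow_ne_top_of_nonneg hp_inv hK.ne) hg.2.ne) ?_
  calc _ ≤ (∫⁻ y, ENNReal.ofReal ((‖x - y‖ ^ (-a) * √(1 + ‖y‖ ^ 2) ^ (-b)) ^ p) ∂μ) ^ (1 / p) *
        eLpNorm g (ENNReal.ofReal q) μ :=
        lintegral_ofReal_mul_norm_le_eLpNorm hpq (fun y => by positivity) (by fun_prop) hg.1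
    _ ≤ K ^ (1 / p) * eLpNorm g (ENNReal.ofReal q) μ := by
      simp_rw [hpow]
      gcongr
      exact lintegral_norm_sub_rpow_neg_mul_sqrt_rpow_neg_le hap₀ hbp₀ x

end AddHaar

theorem stmt18_general (Ψ : EuclideanSpace ℝ (Fin 2) → EuclideanSpace ℂ (Fin 2))
    (hΨ : MemLp Ψ 3 volume) (C : ℝ) (hC : 0 < C)
    (hbound : ∀ᵐ x : EuclideanSpace ℝ (Fin 2),
      ‖Ψ x‖ ≤ C * ∫ y : EuclideanSpace ℝ (Fin 2),
        ‖x - y‖ ^ (-(1 : ℝ)) * Real.sqrt (1 + ‖y‖ ^ 2) ^ (-(2 : ℝ)) * ‖Ψ y‖) :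
    MemLp Ψ ⊤ volume := by
  have hpq : (3 / 2 : ℝ).HolderConjugate 3 :=
    Real.holderConjugate_iff.2 ⟨by norm_num, by norm_num⟩
  obtain ⟨M, hM⟩ := exists_forall_integral_norm_sub_rpow_neg_mul_sqrt_rpow_neg_mul_norm_le
    (μ := volume) (a := 1) (b := 2) (g := Ψ) hpq zero_le_one
    (by rw [finrank_euclideanSpace_fin]; norm_num) (by rw [finrank_euclideanSpace_fin]; norm_num)
    (by simpa using hΨ)
  refine memLp_top_of_bound hΨ.1 (C * M) ?_
  filter_upwards [hbound] with x hx
  exact hx.trans (mul_le_mul_of_nonneg_left (hM x) hC.le)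

theorem stmt18 (Ψ : EuclideanSpace ℝ (Fin 2) → EuclideanSpace ℂ (Fin 2))
    (hmeas : StronglyMeasurable Ψ) (hΨ : MemLp Ψ 3 volume) (C : ℝ) (hC : 0 < C)
    (hbound : ∀ᵐ x : EuclideanSpace ℝ (Fin 2),
      ‖Ψ x‖ ≤ C * ∫ y : EuclideanSpace ℝ (Fin 2),
        ‖x - y‖ ^ (-(1 : ℝ)) * Real.sqrt (1 + ‖y‖ ^ 2) ^ (-(2 : ℝ)) * ‖Ψ y‖) :
    MemLp Ψ ⊤ volume :=
  stmt18_general Ψ hΨ C hC hbound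
end

section
/- Let n ≥ 3 and let φ ∈ L²(ℝⁿ). Then the function ψ(x) = ∫_{ℝⁿ} |x−y|^{1−n} ⟨y⟩^{−1} φ(y) dy defines an element of L²(ℝⁿ), and there is a constant C (independent of φ) with ‖ψ‖_{L²} ≤ C ‖φ‖_{L²}. -/
/-!
The operator is dominated by the positive operator with kernel `K x y = ‖x - y‖ ^ (1 - n) * ⟨y⟩⁻¹`,
which is bounded on `L²` by Schur's test with the weight `w = ⟨·⟩ ^ (-3/2)`: both
`∫ K x y * w y dy ≲ w x` and `∫ K x y * w x dx ≲ w y` are instances of the potential estimate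
`∫ ‖x - y‖ ^ (-a) * ⟨y⟩ ^ (-c) dy ≲ ⟨x⟩ ^ (n - a - c)` for `a, c < n < a + c`, with
`(a, c) = (n - 1, 5/2)` and `(n - 1, 3/2)`; the first of these needs `n ≥ 3`.
The potential estimate comes from splitting space into `‖y - x‖ < ⟨x⟩/2`, `‖y‖ ≥ 2⟨x⟩` and the
rest: on each piece the integrand is dominated by a multiple of a power of `‖y - x‖` or of `‖y‖`,
whose integral over a ball or the complement of a ball is homogeneous in the radius.
-/

open MeasureTheory Metric Set Module Function
open scoped ENNReal Pointwise

noncomputable section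

-- reducible, so that `positivity` sees the square root
abbrev japaneseBracket {E : Type*} [NormedAddCommGroup E] (x : E) : ℝ := √(1 + ‖x‖ ^ 2)

section JapaneseBracket

variable {E : Type*} [NormedAddCommGroup E]

lemma japaneseBracket_pos (x : E) : 0 < japaneseBracket x := by positivity

lemma norm_le_japaneseBracket (x : E) : ‖x‖ ≤ japaneseBracket x :=
  Real.le_sqrt_of_sq_le (le_add_of_nonneg_left zero_le_one)

lemma sq_japaneseBracket (x : E) : japaneseBracket x ^ 2 = 1 + ‖x‖ ^ 2 :=
  Real.sq_sqrt (by positivity)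

lemma japaneseBracket_le_add_norm_sub (x y : E) :
    japaneseBracket x ≤ japaneseBracket y + ‖x - y‖ := by
  have hxy : ‖x‖ ≤ ‖y‖ + ‖x - y‖ := norm_le_norm_add_norm_sub' x y
  have hy := norm_le_japaneseBracket y
  refine le_of_pow_le_pow_left₀ two_ne_zero (by positivity) ?_
  rw [sq_japaneseBracket, add_sq, sq_japaneseBracket]
  nlinarith [mul_self_le_mul_self (norm_nonneg x) hxy,
    mul_le_mul_of_nonneg_right hy (norm_nonneg (x - y))]

end JapaneseBracket

lemma ofReal_mul_rpow_mul_ofReal_mul_rpow {s t X : ℝ} (hs : 0 < s) (ht : 0 < t) (hX : 0 < X)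
    (p q : ℝ) :
    ENNReal.ofReal ((s * X) ^ p) * ENNReal.ofReal ((t * X) ^ q) =
      ENNReal.ofReal (s ^ p * t ^ q) * ENNReal.ofReal (X ^ (p + q)) := by
  rw [Real.mul_rpow hs.le hX.le, Real.mul_rpow ht.le hX.le, Real.rpow_add hX]
  repeat rw [← ENNReal.ofReal_mul (by positivity)]
  ring_nf

lemma compl_ball_zero_eq_smul {E : Type*} [NormedAddCommGroup E] [NormedSpace ℝ E] {R : ℝ}
    (hR : 0 < R) : (ball (0 : E) R)ᶜ = R • (ball (0 : E) 1)ᶜ := by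
  rw [compl_eq_univ_sdiff, compl_eq_univ_sdiff, smul_set_sdiff₀ hR.ne', smul_set_univ₀ hR.ne',
    smul_unitBall_of_pos hR]

lemma setLIntegral_ball_comp_sub_right {E : Type*} [NormedAddCommGroup E] [MeasurableSpace E]
    [MeasurableAdd E] (μ : Measure E) [μ.IsAddRightInvariant] (g : E → ℝ≥0∞) (x : E) (r : ℝ) :
    ∫⁻ y in ball x r, g (y - x) ∂μ = ∫⁻ z in ball 0 r, g z ∂μ := by
  have hpre : (· - x) ⁻¹' ball 0 r = ball x r := by ext y; simp [dist_eq_norm]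
  rw [← hpre, (measurePreserving_sub_right μ x).setLIntegral_comp_preimage_emb
    (measurableEmbedding_subRight x)]

section Potential

variable {E : Type*} [NormedAddCommGroup E] [NormedSpace ℝ E] [FiniteDimensional ℝ E]
  [MeasurableSpace E] [BorelSpace E] (μ : Measure E) [μ.IsAddHaarMeasure]

lemma setLIntegral_smul_set_norm_rpow {r : ℝ} (hr : 0 < r) (b : ℝ) {s : Set E}
    (hs : MeasurableSet s) :
    ∫⁻ z in r • s, ENNReal.ofReal (‖z‖ ^ b) ∂μ =
      ENNReal.ofReal (r ^ ((finrank ℝ E : ℝ) + b)) * ∫⁻ z in s, ENNReal.ofReal (‖z‖ ^ b) ∂μ := by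
  have hmap : ∫⁻ z in s, ENNReal.ofReal (‖z‖ ^ b) ∂(μ.map (r⁻¹ • ·)) =
      ∫⁻ z in r • s, ENNReal.ofReal (r ^ (-b)) * ENNReal.ofReal (‖z‖ ^ b) ∂μ := by
    rw [setLIntegral_map hs (by fun_prop) (by fun_prop), preimage_smul_inv₀ hr.ne']
    refine setLIntegral_congr_fun (hs.const_smul₀ r) fun z _ => ?_
    rw [norm_smul, Real.norm_of_nonneg (inv_nonneg.2 hr.le), Real.mul_rpow (by positivity)
      (norm_nonneg _), Real.inv_rpow hr.le, ← Real.rpow_neg hr.le,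
      ENNReal.ofReal_mul (by positivity)]
  rw [Measure.map_addHaar_smul μ (inv_ne_zero hr.ne'), Measure.restrict_smul,
    lintegral_smul_measure, lintegral_const_mul' _ _ ENNReal.ofReal_ne_top, inv_pow, inv_inv,
    abs_of_pos (by positivity), smul_eq_mul] at hmap
  calc ∫⁻ z in r • s, ENNReal.ofReal (‖z‖ ^ b) ∂μ
      = ENNReal.ofReal (r ^ b) * (ENNReal.ofReal (r ^ (-b)) *
          ∫⁻ z in r • s, ENNReal.ofReal (‖z‖ ^ b) ∂μ) := by
        rw [← mul_assoc, ← ENNReal.ofReal_mul (by positivity), ← Real.rpow_add hr,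
          add_neg_cancel, Real.rpow_zero, ENNReal.ofReal_one, one_mul]
    _ = ENNReal.ofReal (r ^ ((finrank ℝ E : ℝ) + b)) * ∫⁻ z in s, ENNReal.ofReal (‖z‖ ^ b) ∂μ := by
        rw [← hmap, ← mul_assoc, ← ENNReal.ofReal_mul (by positivity), ← Real.rpow_natCast,
          ← Real.rpow_add hr, add_comm]

lemma setLIntegral_ball_norm_rpow_lt_top [Nontrivial E] {a : ℝ} (ha : a < finrank ℝ E) :
    ∫⁻ z in ball 0 1, ENNReal.ofReal (‖z‖ ^ (-a)) ∂μ < ∞ := by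
  refine Integrable.lintegral_lt_top (integrableOn_ball_of_norm_le_rpow (C := 1)
    Module.finrank_pos ha (.of_forall fun z => ?_)
    (continuous_norm.measurable.pow_const _).aestronglyMeasurable)
  rw [Real.norm_of_nonneg (by positivity), one_mul]

lemma setLIntegral_compl_ball_norm_rpow_lt_top {b : ℝ} (hb : finrank ℝ E < b) :
    ∫⁻ z in (ball 0 1)ᶜ, ENNReal.ofReal (‖z‖ ^ (-b)) ∂μ < ∞ := by
  have hb0 : 0 < b := (Nat.cast_nonneg _).trans_lt hb
  calc ∫⁻ z in (ball 0 1)ᶜ, ENNReal.ofReal (‖z‖ ^ (-b)) ∂μ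
      ≤ ∫⁻ z in (ball 0 1)ᶜ, ENNReal.ofReal (2 ^ b) * ENNReal.ofReal ((1 + ‖z‖) ^ (-b)) ∂μ := by
        refine setLIntegral_mono' measurableSet_ball.compl fun z hz => ?_
        have hz : 1 ≤ ‖z‖ := by simpa using hz
        rw [← ENNReal.ofReal_mul (by positivity)]
        refine ENNReal.ofReal_le_ofReal ?_
        calc ‖z‖ ^ (-b) = 2 ^ b * (2 * ‖z‖) ^ (-b) := by
              rw [Real.mul_rpow zero_le_two (norm_nonneg z), ← mul_assoc,
                ← Real.rpow_add two_pos, add_neg_cancel, Real.rpow_zero, one_mul]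
          _ ≤ 2 ^ b * (1 + ‖z‖) ^ (-b) := by
              gcongr 2 ^ b * ?_
              exact Real.rpow_le_rpow_of_nonpos (by positivity) (by linarith) (by linarith)
    _ ≤ ∫⁻ z, ENNReal.ofReal (2 ^ b) * ENNReal.ofReal ((1 + ‖z‖) ^ (-b)) ∂μ :=
        setLIntegral_le_lintegral _ _
    _ < ∞ := by
        rw [lintegral_const_mul' _ _ ENNReal.ofReal_ne_top]
        exact ENNReal.mul_lt_top ENNReal.ofReal_lt_top (finite_integral_one_add_norm hb)

lemma exists_setLIntegral_ball_japaneseBracket_le [Nontrivial E] {a c : ℝ}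
    (ha : a < finrank ℝ E) (hc : 0 ≤ c) :
    ∃ M ≠ ∞, ∀ x : E, ∫⁻ y in ball x (2⁻¹ * japaneseBracket x),
      ENNReal.ofReal (‖x - y‖ ^ (-a) * japaneseBracket y ^ (-c)) ∂μ ≤
        M * ENNReal.ofReal (japaneseBracket x ^ (finrank ℝ E - a - c)) := by
  set I := ∫⁻ z in ball 0 1, ENNReal.ofReal (‖z‖ ^ (-a)) ∂μ
  refine ⟨ENNReal.ofReal ((2⁻¹ : ℝ) ^ (-c) * 2⁻¹ ^ ((finrank ℝ E : ℝ) + -a)) * I,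
    ENNReal.mul_ne_top ENNReal.ofReal_ne_top (setLIntegral_ball_norm_rpow_lt_top μ ha).ne,
    fun x => ?_⟩
  have hX := japaneseBracket_pos x
  set r := 2⁻¹ * japaneseBracket x with hr_def
  have hr : 0 < r := by positivity
  calc ∫⁻ y in ball x r, ENNReal.ofReal (‖x - y‖ ^ (-a) * japaneseBracket y ^ (-c)) ∂μ
      ≤ ∫⁻ y in ball x r, ENNReal.ofReal (‖y - x‖ ^ (-a)) * ENNReal.ofReal (r ^ (-c)) ∂μ := by
        refine setLIntegral_mono' measurableSet_ball fun y hy => ?_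
        rw [mem_ball, dist_eq_norm] at hy
        have hry : r ≤ japaneseBracket y := by
          linarith [japaneseBracket_le_add_norm_sub x y, norm_sub_rev x y]
        rw [← ENNReal.ofReal_mul (by positivity), norm_sub_rev]
        exact ENNReal.ofReal_le_ofReal (mul_le_mul_of_nonneg_left
          (Real.rpow_le_rpow_of_nonpos hr hry (neg_nonpos.2 hc)) (by positivity))
    _ = ENNReal.ofReal (r ^ (-c)) * (ENNReal.ofReal (r ^ ((finrank ℝ E : ℝ) + -a)) * I) := by
        rw [lintegral_mul_const' _ _ ENNReal.ofReal_ne_top, mul_comm,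
          setLIntegral_ball_comp_sub_right μ (fun z => ENNReal.ofReal (‖z‖ ^ (-a))),
          ← smul_unitBall_of_pos hr, setLIntegral_smul_set_norm_rpow μ hr _ measurableSet_ball]
    _ = _ := by
        rw [← mul_assoc, ofReal_mul_rpow_mul_ofReal_mul_rpow (by norm_num) (by norm_num) hX]
        ring_nf

lemma exists_setLIntegral_compl_ball_japaneseBracket_le {a c : ℝ} (ha : 0 ≤ a) (hc : 0 ≤ c)
    (hac : finrank ℝ E < a + c) :
    ∃ M ≠ ∞, ∀ x : E, ∫⁻ y in (ball 0 (2 * japaneseBracket x))ᶜ,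
      ENNReal.ofReal (‖x - y‖ ^ (-a) * japaneseBracket y ^ (-c)) ∂μ ≤
        M * ENNReal.ofReal (japaneseBracket x ^ (finrank ℝ E - a - c)) := by
  set I := ∫⁻ z in (ball 0 1)ᶜ, ENNReal.ofReal (‖z‖ ^ (-(a + c))) ∂μ
  refine ⟨ENNReal.ofReal (2 ^ a * 2 ^ ((finrank ℝ E : ℝ) + -(a + c))) * I,
    ENNReal.mul_ne_top ENNReal.ofReal_ne_top (setLIntegral_compl_ball_norm_rpow_lt_top μ hac).ne,
    fun x => ?_⟩
  have hX := japaneseBracket_pos x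
  set R := 2 * japaneseBracket x with hR_def
  have hR : 0 < R := by positivity
  calc ∫⁻ y in (ball 0 R)ᶜ, ENNReal.ofReal (‖x - y‖ ^ (-a) * japaneseBracket y ^ (-c)) ∂μ
      ≤ ∫⁻ y in (ball 0 R)ᶜ, ENNReal.ofReal (2 ^ a) * ENNReal.ofReal (‖y‖ ^ (-(a + c))) ∂μ := by
        refine setLIntegral_mono' measurableSet_ball.compl fun y hy => ?_
        have hRy : R ≤ ‖y‖ := by simpa using hy
        have hy0 : 0 < ‖y‖ := hR.trans_le hRy
        have hxy : 2⁻¹ * ‖y‖ ≤ ‖x - y‖ := by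
          linarith [norm_sub_norm_le y x, norm_sub_rev x y, norm_le_japaneseBracket x]
        rw [← ENNReal.ofReal_mul (by positivity)]
        refine ENNReal.ofReal_le_ofReal ?_
        calc ‖x - y‖ ^ (-a) * japaneseBracket y ^ (-c)
            ≤ (2⁻¹ * ‖y‖) ^ (-a) * ‖y‖ ^ (-c) :=
              mul_le_mul (Real.rpow_le_rpow_of_nonpos (by positivity) hxy (neg_nonpos.2 ha))
                (Real.rpow_le_rpow_of_nonpos hy0 (norm_le_japaneseBracket y) (neg_nonpos.2 hc))
                (by positivity) (by positivity)
          _ = 2 ^ a * ‖y‖ ^ (-(a + c)) := by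
              rw [Real.mul_rpow (by norm_num) hy0.le, Real.inv_rpow zero_le_two,
                ← Real.rpow_neg zero_le_two, neg_neg, mul_assoc, ← Real.rpow_add hy0, neg_add]
    _ = ENNReal.ofReal (2 ^ a) * (ENNReal.ofReal (R ^ ((finrank ℝ E : ℝ) + -(a + c))) * I) := by
        rw [lintegral_const_mul' _ _ ENNReal.ofReal_ne_top, compl_ball_zero_eq_smul hR,
          setLIntegral_smul_set_norm_rpow μ hR _ measurableSet_ball.compl]
    _ = _ := by
        rw [hR_def, Real.mul_rpow zero_le_two hX.le, ENNReal.ofReal_mul (by positivity),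
          ENNReal.ofReal_mul (by positivity)]
        ring_nf

lemma exists_setLIntegral_ball_sdiff_ball_japaneseBracket_le [Nontrivial E] {a c : ℝ}
    (ha : 0 ≤ a) (hc : 0 ≤ c) (hcd : c < finrank ℝ E) :
    ∃ M ≠ ∞, ∀ x : E, ∫⁻ y in ball 0 (2 * japaneseBracket x) \ ball x (2⁻¹ * japaneseBracket x),
      ENNReal.ofReal (‖x - y‖ ^ (-a) * japaneseBracket y ^ (-c)) ∂μ ≤
        M * ENNReal.ofReal (japaneseBracket x ^ (finrank ℝ E - a - c)) := by
  set I := ∫⁻ z in ball 0 1, ENNReal.ofReal (‖z‖ ^ (-c)) ∂μ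
  refine ⟨ENNReal.ofReal ((2⁻¹ : ℝ) ^ (-a) * 2 ^ ((finrank ℝ E : ℝ) + -c)) * I,
    ENNReal.mul_ne_top ENNReal.ofReal_ne_top (setLIntegral_ball_norm_rpow_lt_top μ hcd).ne,
    fun x => ?_⟩
  have hX := japaneseBracket_pos x
  set r := 2⁻¹ * japaneseBracket x
  set R := 2 * japaneseBracket x
  have hr : 0 < r := by positivity
  have hR : 0 < R := by positivity
  calc ∫⁻ y in ball 0 R \ ball x r, ENNReal.ofReal (‖x - y‖ ^ (-a) * japaneseBracket y ^ (-c)) ∂μ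
      ≤ ∫⁻ y in ball 0 R \ ball x r,
          ENNReal.ofReal (r ^ (-a)) * ENNReal.ofReal (‖y‖ ^ (-c)) ∂μ := by
        refine setLIntegral_mono_ae' (measurableSet_ball.diff measurableSet_ball) ?_
        -- the bound fails at `y = 0`, where `‖y‖ ^ (-c)` is the junk value `0`
        filter_upwards [μ.ae_ne 0] with y hy0 hy
        have hry : r ≤ ‖x - y‖ := by simpa [dist_eq_norm, norm_sub_rev] using hy.2
        rw [← ENNReal.ofReal_mul (by positivity)]
        refine ENNReal.ofReal_le_ofReal (mul_le_mul ?_ ?_ (by positivity) (by positivity))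
        · exact Real.rpow_le_rpow_of_nonpos hr hry (neg_nonpos.2 ha)
        · exact Real.rpow_le_rpow_of_nonpos (norm_pos_iff.2 hy0) (norm_le_japaneseBracket y)
            (neg_nonpos.2 hc)
    _ ≤ ENNReal.ofReal (r ^ (-a)) * ∫⁻ y in ball 0 R, ENNReal.ofReal (‖y‖ ^ (-c)) ∂μ := by
        rw [lintegral_const_mul' _ _ ENNReal.ofReal_ne_top]
        gcongr
        exact sdiff_subset
    _ = ENNReal.ofReal (r ^ (-a)) * (ENNReal.ofReal (R ^ ((finrank ℝ E : ℝ) + -c)) * I) := by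
        rw [← smul_unitBall_of_pos hR, setLIntegral_smul_set_norm_rpow μ hR _ measurableSet_ball]
    _ = _ := by
        rw [← mul_assoc, ofReal_mul_rpow_mul_ofReal_mul_rpow (by norm_num) (by norm_num) hX]
        ring_nf

theorem exists_lintegral_norm_sub_rpow_mul_japaneseBracket_rpow_le {a c : ℝ}
    (ha : a < finrank ℝ E) (hc : c < finrank ℝ E) (hac : finrank ℝ E < a + c) :
    ∃ M ≠ ∞, ∀ x : E, ∫⁻ y, ENNReal.ofReal (‖x - y‖ ^ (-a) * japaneseBracket y ^ (-c)) ∂μ ≤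
      M * ENNReal.ofReal (japaneseBracket x ^ (finrank ℝ E - a - c)) := by
  have ha0 : 0 ≤ a := by linarith
  have hc0 : 0 ≤ c := by linarith
  have : Nontrivial E :=
    Module.nontrivial_of_finrank_pos (R := ℝ) (by exact_mod_cast ha0.trans_lt ha)
  obtain ⟨MA, hMA, hA⟩ := exists_setLIntegral_ball_japaneseBracket_le μ ha hc0
  obtain ⟨MC, hMC, hC⟩ := exists_setLIntegral_ball_sdiff_ball_japaneseBracket_le μ ha0 hc0 hc
  obtain ⟨MB, hMB, hB⟩ := exists_setLIntegral_compl_ball_japaneseBracket_le μ ha0 hc0 hac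
  refine ⟨MA + MC + MB, by simp [hMA, hMB, hMC], fun x => ?_⟩
  set F := fun y => ENNReal.ofReal (‖x - y‖ ^ (-a) * japaneseBracket y ^ (-c))
  set A := ball x (2⁻¹ * japaneseBracket x)
  set B := ball (0 : E) (2 * japaneseBracket x)
  have hcover : A ∪ (B \ A) ∪ Bᶜ = univ := by
    rw [union_sdiff_self, union_assoc, union_compl_self, union_univ]
  calc ∫⁻ y, F y ∂μ = ∫⁻ y in A ∪ (B \ A) ∪ Bᶜ, F y ∂μ := by rw [hcover, setLIntegral_univ]
    _ ≤ ∫⁻ y in A, F y ∂μ + ∫⁻ y in B \ A, F y ∂μ + ∫⁻ y in Bᶜ, F y ∂μ :=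
        (lintegral_union_le _ _ _).trans (add_le_add_left (lintegral_union_le _ _ _) _)
    _ ≤ _ := by
        rw [add_mul, add_mul]
        exact add_le_add (add_le_add (hA x) (hC x)) (hB x)

end Potential

section IntegralOperator

variable {α β : Type*} [MeasurableSpace α] [MeasurableSpace β] {μ : Measure α} {ν : Measure β}

lemma ENNReal.rpow_one_half_sq (z : ℝ≥0∞) : (z ^ (1 / 2 : ℝ)) ^ 2 = z := by
  rw [← ENNReal.rpow_natCast, ← ENNReal.rpow_mul]
  norm_num

lemma sq_lintegral_mul_le {f g : β → ℝ≥0∞} (hf : AEMeasurable f ν) (hg : AEMeasurable g ν) :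
    (∫⁻ y, f y * g y ∂ν) ^ 2 ≤ (∫⁻ y, f y ^ 2 ∂ν) * ∫⁻ y, g y ^ 2 ∂ν := by
  have h := ENNReal.lintegral_mul_le_Lp_mul_Lq ν Real.HolderConjugate.two_two hf hg
  simp only [Pi.mul_apply, ENNReal.rpow_two] at h
  calc (∫⁻ y, f y * g y ∂ν) ^ 2
      ≤ ((∫⁻ y, f y ^ 2 ∂ν) ^ (1 / 2 : ℝ) * (∫⁻ y, g y ^ 2 ∂ν) ^ (1 / 2 : ℝ)) ^ 2 :=
        pow_le_pow_left₀ zero_le h 2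
    _ = (∫⁻ y, f y ^ 2 ∂ν) * ∫⁻ y, g y ^ 2 ∂ν := by
        rw [mul_pow, ENNReal.rpow_one_half_sq, ENNReal.rpow_one_half_sq]

lemma sq_lintegral_mul_le_lintegral_mul_weight {k f w : β → ℝ≥0∞} (hk : AEMeasurable k ν)
    (hf : AEMeasurable f ν) (hw : AEMeasurable w ν) (hw0 : ∀ y, w y ≠ 0) (hw_top : ∀ y, w y ≠ ∞) :
    (∫⁻ y, k y * f y ∂ν) ^ 2 ≤ (∫⁻ y, k y * w y ∂ν) * ∫⁻ y, k y * (f y ^ 2 / w y) ∂ν := by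
  have hsplit : ∀ y,
      k y * f y = (k y * w y) ^ (1 / 2 : ℝ) * (k y * (f y ^ 2 / w y)) ^ (1 / 2 : ℝ) := by
    intro y
    rw [← ENNReal.mul_rpow_of_nonneg _ _ (by norm_num),
      show k y * w y * (k y * (f y ^ 2 / w y)) = (k y * f y) ^ 2 * (w y * (w y)⁻¹) by
        rw [div_eq_mul_inv]; ring,
      ENNReal.mul_inv_cancel (hw0 y) (hw_top y), mul_one, ← ENNReal.rpow_natCast,
      ← ENNReal.rpow_mul]
    norm_num
  simp_rw [hsplit]
  simpa only [ENNReal.rpow_one_half_sq, Pi.mul_apply, Pi.div_apply] using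
    sq_lintegral_mul_le ((hk.mul hw).pow_const (1 / 2 : ℝ))
      ((hk.mul ((hf.pow_const 2).div hw)).pow_const (1 / 2 : ℝ))

theorem lintegral_sq_lintegral_mul_le_of_schur [SFinite μ] [SFinite ν] {K : α → β → ℝ≥0∞}
    (hK : Measurable (uncurry K)) {p : α → ℝ≥0∞} {q : β → ℝ≥0∞} (hp : Measurable p)
    (hq : Measurable q) (hq0 : ∀ y, q y ≠ 0) (hq_top : ∀ y, q y ≠ ∞) {A B : ℝ≥0∞}
    (hrow : ∀ x, ∫⁻ y, K x y * q y ∂ν ≤ A * p x) (hcol : ∀ y, ∫⁻ x, K x y * p x ∂μ ≤ B * q y)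
    {f : β → ℝ≥0∞} (hf : AEMeasurable f ν) :
    ∫⁻ x, (∫⁻ y, K x y * f y ∂ν) ^ 2 ∂μ ≤ A * B * ∫⁻ y, f y ^ 2 ∂ν := by
  set g := fun y => f y ^ 2 / q y
  have hg : AEMeasurable g ν := (hf.pow_const 2).div hq.aemeasurable
  calc ∫⁻ x, (∫⁻ y, K x y * f y ∂ν) ^ 2 ∂μ
      ≤ ∫⁻ x, ∫⁻ y, A * p x * (K x y * g y) ∂ν ∂μ := by
        refine lintegral_mono fun x => ?_
        have hKx : Measurable (K x) := hK.comp measurable_prodMk_left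
        rw [lintegral_const_mul'' (f := fun y => K x y * g y) _ (hKx.aemeasurable.mul hg)]
        exact (sq_lintegral_mul_le_lintegral_mul_weight hKx.aemeasurable hf hq.aemeasurable hq0
          hq_top).trans (mul_le_mul_left (hrow x) _)
    _ = ∫⁻ y, ∫⁻ x, A * p x * (K x y * g y) ∂μ ∂ν :=
        lintegral_lintegral_swap (((hp.comp measurable_fst).const_mul A).aemeasurable.mul
          (hK.aemeasurable.mul (hg.comp_quasiMeasurePreserving Measure.quasiMeasurePreserving_snd)))
    _ ≤ ∫⁻ y, A * (B * q y) * g y ∂ν := by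
        refine lintegral_mono fun y => ?_
        have hKy : Measurable fun x => K x y := hK.comp measurable_prodMk_right
        calc ∫⁻ x, A * p x * (K x y * g y) ∂μ = A * (∫⁻ x, K x y * p x ∂μ) * g y := by
              have hKp : AEMeasurable (fun x => K x y * p x) μ := (hKy.mul hp).aemeasurable
              rw [← lintegral_const_mul'' _ hKp, ← lintegral_mul_const'' _ (hKp.const_mul A)]
              congr 1 with x
              ring
          _ ≤ A * (B * q y) * g y := by gcongr; exact hcol y
    _ = A * B * ∫⁻ y, f y ^ 2 ∂ν := by
        rw [← lintegral_const_mul'' _ (hf.pow_const 2)]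
        congr 1 with y
        rw [mul_assoc A, mul_assoc, mul_assoc, ENNReal.mul_div_cancel (hq0 y) (hq_top y)]

theorem eLpNorm_lintegral_mul_le_of_schur [SFinite μ] [SFinite ν] {K : α → β → ℝ≥0∞}
    (hK : Measurable (uncurry K)) {p : α → ℝ≥0∞} {q : β → ℝ≥0∞} (hp : Measurable p)
    (hq : Measurable q) (hq0 : ∀ y, q y ≠ 0) (hq_top : ∀ y, q y ≠ ∞) {A B : ℝ≥0∞}
    (hrow : ∀ x, ∫⁻ y, K x y * q y ∂ν ≤ A * p x) (hcol : ∀ y, ∫⁻ x, K x y * p x ∂μ ≤ B * q y)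
    {f : β → ℝ≥0∞} (hf : AEMeasurable f ν) :
    eLpNorm (fun x => ∫⁻ y, K x y * f y ∂ν) 2 μ ≤ (A * B) ^ (1 / 2 : ℝ) * eLpNorm f 2 ν := by
  simp only [eLpNorm_eq_lintegral_rpow_enorm_toReal two_ne_zero ENNReal.ofNat_ne_top,
    enorm_eq_self, ENNReal.toReal_ofNat, ENNReal.rpow_two]
  rw [← ENNReal.mul_rpow_of_nonneg _ _ (by norm_num)]
  exact ENNReal.rpow_le_rpow
    (lintegral_sq_lintegral_mul_le_of_schur hK hp hq hq0 hq_top hrow hcol hf) (by norm_num)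

theorem memLp_integral_mul_of_eLpNorm_lintegral_le [SFinite ν] {k : α → β → ℝ}
    (hk : Measurable (uncurry k)) (hk0 : ∀ x y, 0 ≤ k x y) {p C : ℝ≥0∞} (hC : C ≠ ∞)
    (hT : ∀ f : β → ℝ≥0∞, AEMeasurable f ν →
      eLpNorm (fun x => ∫⁻ y, ENNReal.ofReal (k x y) * f y ∂ν) p μ ≤ C * eLpNorm f p ν)
    {φ : β → ℝ} (hφ : MemLp φ p ν) :
    MemLp (fun x => ∫ y, k x y * φ y ∂ν) p μ ∧
      eLpNorm (fun x => ∫ y, k x y * φ y ∂ν) p μ ≤ C * eLpNorm φ p ν := by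
  have hle : eLpNorm (fun x => ∫ y, k x y * φ y ∂ν) p μ ≤ C * eLpNorm φ p ν :=
    calc eLpNorm (fun x => ∫ y, k x y * φ y ∂ν) p μ
        ≤ eLpNorm (fun x => ∫⁻ y, ENNReal.ofReal (k x y) * ‖φ y‖ₑ ∂ν) p μ := by
          refine eLpNorm_mono_enorm fun x => ?_
          rw [enorm_eq_self]
          refine (enorm_integral_le_lintegral_enorm _).trans_eq (lintegral_congr fun y => ?_)
          rw [enorm_mul, Real.enorm_of_nonneg (hk0 x y)]
      _ ≤ C * eLpNorm φ p ν := by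
          rw [← eLpNorm_enorm φ]
          exact hT _ hφ.1.enorm
  have hmeas : AEStronglyMeasurable (fun x => ∫ y, k x y * φ y ∂ν) μ :=
    (hk.aestronglyMeasurable.mul hφ.1.comp_snd).integral_prod_right'
  exact ⟨⟨hmeas, hle.trans_lt (ENNReal.mul_lt_top hC.lt_top hφ.2)⟩, hle⟩

end IntegralOperator

section Riesz

variable {E : Type*} [NormedAddCommGroup E] [NormedSpace ℝ E] [FiniteDimensional ℝ E]
  [MeasurableSpace E] [BorelSpace E] (μ : Measure E) [μ.IsAddHaarMeasure]

lemma exists_lintegral_kernel_mul_weight_right_le (hd : 3 ≤ finrank ℝ E) :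
    ∃ A ≠ ∞, ∀ x : E, ∫⁻ y, ENNReal.ofReal
        (‖x - y‖ ^ (1 - (finrank ℝ E : ℝ)) * japaneseBracket y ^ (-1 : ℝ)) *
          ENNReal.ofReal (japaneseBracket y ^ (-(3 / 2) : ℝ)) ∂μ ≤
        A * ENNReal.ofReal (japaneseBracket x ^ (-(3 / 2) : ℝ)) := by
  have hd' : (3 : ℝ) ≤ finrank ℝ E := by exact_mod_cast hd
  obtain ⟨A, hA, hbound⟩ := exists_lintegral_norm_sub_rpow_mul_japaneseBracket_rpow_le μ
    (a := finrank ℝ E - 1) (c := 5 / 2) (by linarith) (by linarith) (by linarith)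
  refine ⟨A, hA, fun x => ?_⟩
  calc _ = ∫⁻ y, ENNReal.ofReal (‖x - y‖ ^ (-((finrank ℝ E : ℝ) - 1)) *
          japaneseBracket y ^ (-(5 / 2) : ℝ)) ∂μ := by
        refine lintegral_congr fun y => ?_
        rw [← ENNReal.ofReal_mul (by positivity), mul_assoc,
          ← Real.rpow_add (japaneseBracket_pos y), neg_sub]
        norm_num
    _ ≤ _ := hbound x
    _ = _ := by ring_nf

lemma exists_lintegral_kernel_mul_weight_left_le (hd : 2 ≤ finrank ℝ E) :
    ∃ B ≠ ∞, ∀ y : E, ∫⁻ x, ENNReal.ofReal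
        (‖x - y‖ ^ (1 - (finrank ℝ E : ℝ)) * japaneseBracket y ^ (-1 : ℝ)) *
          ENNReal.ofReal (japaneseBracket x ^ (-(3 / 2) : ℝ)) ∂μ ≤
        B * ENNReal.ofReal (japaneseBracket y ^ (-(3 / 2) : ℝ)) := by
  have hd' : (2 : ℝ) ≤ finrank ℝ E := by exact_mod_cast hd
  obtain ⟨B, hB, hbound⟩ := exists_lintegral_norm_sub_rpow_mul_japaneseBracket_rpow_le μ
    (a := finrank ℝ E - 1) (c := 3 / 2) (by linarith) (by linarith) (by linarith)
  refine ⟨B, hB, fun y => ?_⟩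
  calc _ = ENNReal.ofReal (japaneseBracket y ^ (-1 : ℝ)) * ∫⁻ x, ENNReal.ofReal
          (‖y - x‖ ^ (-((finrank ℝ E : ℝ) - 1)) * japaneseBracket x ^ (-(3 / 2) : ℝ)) ∂μ := by
        rw [← lintegral_const_mul' _ _ ENNReal.ofReal_ne_top]
        refine lintegral_congr fun x => ?_
        rw [← ENNReal.ofReal_mul (by positivity), ← ENNReal.ofReal_mul (by positivity),
          norm_sub_rev, neg_sub]
        ring_nf
    _ ≤ ENNReal.ofReal (japaneseBracket y ^ (-1 : ℝ)) * (B * ENNReal.ofReal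
          (japaneseBracket y ^ ((finrank ℝ E : ℝ) - (finrank ℝ E - 1) - 3 / 2))) := by
        gcongr
        exact hbound y
    _ = _ := by
        rw [mul_left_comm, ← ENNReal.ofReal_mul (by positivity),
          ← Real.rpow_add (japaneseBracket_pos y)]
        ring_nf

theorem exists_eLpNorm_lintegral_kernel_le (hd : 3 ≤ finrank ℝ E) :
    ∃ C ≠ ∞, ∀ f : E → ℝ≥0∞, AEMeasurable f μ →
      eLpNorm (fun x => ∫⁻ y, ENNReal.ofReal
        (‖x - y‖ ^ (1 - (finrank ℝ E : ℝ)) * japaneseBracket y ^ (-1 : ℝ)) * f y ∂μ) 2 μ ≤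
        C * eLpNorm f 2 μ := by
  obtain ⟨A, hA, hrow⟩ := exists_lintegral_kernel_mul_weight_right_le μ hd
  obtain ⟨B, hB, hcol⟩ := exists_lintegral_kernel_mul_weight_left_le μ (by omega)
  refine ⟨(A * B) ^ (1 / 2 : ℝ),
    ENNReal.rpow_ne_top_of_nonneg (by norm_num) (ENNReal.mul_ne_top hA hB), fun f hf => ?_⟩
  exact eLpNorm_lintegral_mul_le_of_schur (by fun_prop) (by fun_prop) (by fun_prop)
    (fun x => (ENNReal.ofReal_pos.2 (by positivity)).ne') (fun _ => ENNReal.ofReal_ne_top)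
    hrow hcol hf

end Riesz

theorem stmt19 (n : ℕ) (hn : 3 ≤ n) :
    ∃ C : ℝ, 0 < C ∧ ∀ φ : EuclideanSpace ℝ (Fin n) → ℝ,
      MemLp φ 2 volume →
      MemLp (fun x : EuclideanSpace ℝ (Fin n) =>
          ∫ y : EuclideanSpace ℝ (Fin n),
            ‖x - y‖ ^ (1 - (n : ℝ)) * Real.sqrt (1 + ‖y‖ ^ 2) ^ (-(1 : ℝ)) * φ y)
        2 volume ∧
      eLpNorm (fun x : EuclideanSpace ℝ (Fin n) =>
          ∫ y : EuclideanSpace ℝ (Fin n),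
            ‖x - y‖ ^ (1 - (n : ℝ)) * Real.sqrt (1 + ‖y‖ ^ 2) ^ (-(1 : ℝ)) * φ y)
          2 volume
        ≤ ENNReal.ofReal C * eLpNorm φ 2 volume := by
  obtain ⟨C, hC, hT⟩ := exists_eLpNorm_lintegral_kernel_le
    (volume : Measure (EuclideanSpace ℝ (Fin n))) (by simpa using hn)
  simp only [finrank_euclideanSpace_fin] at hT
  refine ⟨C.toReal + 1, by positivity, fun φ hφ => ?_⟩
  obtain ⟨hmem, hle⟩ := memLp_integral_mul_of_eLpNorm_lintegral_le (by fun_prop)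
    (fun x y => by positivity) hC hT hφ
  refine ⟨hmem, hle.trans (mul_le_mul_left ?_ _)⟩
  exact (ENNReal.le_ofReal_iff_toReal_le hC (by positivity)).2 (le_add_of_nonneg_right zero_le_one)
end
end
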